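/- Let A = ℂ² with basis {e₁, e₂} and product e₁e₁ = e₁, e₂e₂ = e₂, e₁e₂ = e₂e₁ = 0 (the Novikov algebra (N1)). Then a linear map α with matrix entries a₁, b₁, a₂, b₂ (α(e₁) = a₁e₁ + a₂e₂, α(e₂) = b₁e₁ + b₂e₂) is an algebra morphism if and only if each of a₁, a₂, b₁, b₂ lies in {0, 1} and a₁b₁ = 0 = a₂b₂. In particular, A has exactly nine algebra endomorphisms. -/

import Mathlib

/-!
The product of `A` is the coordinatewise product of `ℂ²`, for which `e₁, e₂` are the standard
idempotents. By bilinearity a linear map `α` is multiplicative iff `α e₁, α e₂` are orthogonal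
idempotents. Orthogonality and idempotency in `ℂ²` hold coordinatewise, and in a domain an
orthogonal family of idempotents is either zero or a single `1`. So each coordinate of
`(α e₁, α e₂)` is one of `(0, 0)`, `(1, 0)`, `(0, 1)`, which gives `3 ^ 2 = 9` morphisms.
-/

/-- The 2-dimensional complex Novikov algebra (N1): e₁e₁ = e₁, e₂e₂ = e₂,
e₁e₂ = e₂e₁ = 0, extended bilinearly. -/
def muN1 : (Fin 2 → ℂ) → (Fin 2 → ℂ) → (Fin 2 → ℂ) :=
  fun u v => ![u 0 * v 0, u 1 * v 1]

theorem muN1_eq_mul : muN1 = (· * ·) := by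
  ext u v k
  fin_cases k <;> rfl

theorem Pi.single_one_mul_single_one {ι S : Type*} [DecidableEq ι] [MulZeroOneClass S] (i j : ι) :
    (Pi.single i 1 : ι → S) * Pi.single j 1 = if i = j then Pi.single i 1 else 0 := by
  rw [← Pi.single_mul_left, one_mul, Pi.single_apply]
  split_ifs with h
  · rw [h]
  · exact Pi.single_zero i

theorem orthogonalIdempotents_pi_iff {ι κ : Type*} {K : κ → Type*} [∀ k, Semiring (K k)]
    (e : ι → ∀ k, K k) :
    OrthogonalIdempotents e ↔ ∀ k, OrthogonalIdempotents fun i ↦ e i k := by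
  simp only [orthogonalIdempotents_iff, IsIdempotentElem, Pairwise, funext_iff, Pi.mul_apply,
    Pi.zero_apply]
  grind

theorem OrthogonalIdempotents.fin_two_iff {R : Type*} [CommSemiring R] (e : Fin 2 → R) :
    OrthogonalIdempotents e ↔ IsIdempotentElem (e 0) ∧ IsIdempotentElem (e 1) ∧ e 0 * e 1 = 0 := by
  simp [orthogonalIdempotents_iff, Pairwise, Fin.forall_fin_two, mul_comm (e 1), and_assoc]

theorem orthogonalIdempotents_iff_eq_zero_or_eq_single {ι K : Type*} [DecidableEq ι] [Semiring K]
    [IsLeftCancelMulZero K] (e : ι → K) :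
    OrthogonalIdempotents e ↔ e = 0 ∨ ∃ i, e = Pi.single i 1 := by
  constructor
  · intro he
    by_cases h : ∃ i, e i = 1
    · obtain ⟨i, hi⟩ := h
      refine Or.inr ⟨i, funext fun j ↦ ?_⟩
      rcases eq_or_ne j i with rfl | hji
      · simp [hi]
      · simpa [hji, hi] using he.ortho hji
    · push Not at h
      exact Or.inl <| funext fun j ↦
        (IsIdempotentElem.iff_eq_zero_or_one.mp (he.idem j)).resolve_right (h j)
  · rintro (rfl | ⟨i, rfl⟩)
    · exact ⟨fun _ ↦ IsIdempotentElem.zero, fun _ _ _ ↦ mul_zero 0⟩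
    · rw [OrthogonalIdempotents.iff_mul_eq]
      intro j k
      simp only [Pi.single_apply]
      split_ifs <;> simp_all

theorem Nat.card_orthogonalIdempotents {ι K : Type*} [Finite ι] [DecidableEq ι] [Semiring K]
    [IsLeftCancelMulZero K] [Nontrivial K] :
    Nat.card {e : ι → K // OrthogonalIdempotents e} = Nat.card ι + 1 := by
  have hset : {e : ι → K | OrthogonalIdempotents e} =
      insert 0 (Set.range fun i ↦ Pi.single i 1) := by
    ext e
    simp [orthogonalIdempotents_iff_eq_zero_or_eq_single, eq_comm]
  have hinj : Function.Injective fun i : ι ↦ (Pi.single i 1 : ι → K) := fun i j h ↦ by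
    by_contra hij
    simpa [hij] using congr_fun h i
  have hzero : (0 : ι → K) ∉ Set.range fun i ↦ Pi.single i 1 := by
    rintro ⟨i, hi⟩
    simpa using congr_fun hi i
  rw [← Set.coe_ofPred, Nat.card_coe_set_eq, hset, Set.ncard_insert_of_notMem hzero,
    Set.ncard_range_of_injective hinj]

theorem Nat.card_orthogonalIdempotents_pi {ι κ K : Type*} [Finite ι] [DecidableEq ι] [Finite κ]
    [Semiring K] [IsLeftCancelMulZero K] [Nontrivial K] :
    Nat.card {e : ι → κ → K // OrthogonalIdempotents e} = (Nat.card ι + 1) ^ Nat.card κ := by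
  rw [Nat.card_congr ((Equiv.subtypeEquiv (Equiv.piComm _) orthogonalIdempotents_pi_iff).trans
    Equiv.subtypePiEquivPi), Nat.card_fun, Nat.card_orthogonalIdempotents]

theorem LinearMap.map_mul_iff_orthogonalIdempotents {ι R A : Type*} [Finite ι] [DecidableEq ι]
    [CommSemiring R] [Semiring A] [Algebra R A] (f : (ι → R) →ₗ[R] A) :
    (∀ u v, f (u * v) = f u * f v) ↔ OrthogonalIdempotents fun i ↦ f (Pi.single i 1) := by
  rw [OrthogonalIdempotents.iff_mul_eq]
  constructor
  · intro hf i j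
    rw [← hf, Pi.single_one_mul_single_one, apply_ite f, map_zero]
  · intro he u v
    have hbilin : (LinearMap.mul R A).compl₁₂ f f = (LinearMap.mul R (ι → R)).compr₂ f :=
      LinearMap.ext_basis (Pi.basisFun R ι) (Pi.basisFun R ι) fun i j ↦ by
        simp [he, Pi.single_one_mul_single_one, apply_ite f]
    exact (LinearMap.congr_fun₂ hbilin u v).symm

theorem Nat.card_linearMap_pi_map_mul (R A ι : Type*) [Finite ι] [DecidableEq ι] [CommSemiring R]
    [Semiring A] [Algebra R A] :
    Nat.card {f : (ι → R) →ₗ[R] A // ∀ u v, f (u * v) = f u * f v} =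
      Nat.card {e : ι → A // OrthogonalIdempotents e} :=
  Nat.card_congr <| Equiv.subtypeEquiv ((Pi.basisFun R ι).constr R).symm.toEquiv fun f ↦ by
    rw [f.map_mul_iff_orthogonalIdempotents]
    congr!
    simp

theorem N1_morphisms_classification :
    (∀ α : (Fin 2 → ℂ) →ₗ[ℂ] (Fin 2 → ℂ),
      (∀ u v, α (muN1 u v) = muN1 (α u) (α v)) ↔
      ((α ![1, 0]) 0 ∈ ({0, 1} : Set ℂ) ∧ (α ![1, 0]) 1 ∈ ({0, 1} : Set ℂ) ∧
       (α ![0, 1]) 0 ∈ ({0, 1} : Set ℂ) ∧ (α ![0, 1]) 1 ∈ ({0, 1} : Set ℂ) ∧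
       (α ![1, 0]) 0 * (α ![0, 1]) 0 = 0 ∧
       (α ![1, 0]) 1 * (α ![0, 1]) 1 = 0)) ∧
    Set.ncard {α : (Fin 2 → ℂ) →ₗ[ℂ] (Fin 2 → ℂ) |
      ∀ u v, α (muN1 u v) = muN1 (α u) (α v)} = 9 := by
  have he₀ : (![1, 0] : Fin 2 → ℂ) = Pi.single 0 1 := by
    ext k; fin_cases k <;> rfl
  have he₁ : (![0, 1] : Fin 2 → ℂ) = Pi.single 1 1 := by
    ext k; fin_cases k <;> rfl
  simp only [muN1_eq_mul, he₀, he₁]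
  constructor
  · intro α
    rw [α.map_mul_iff_orthogonalIdempotents, orthogonalIdempotents_pi_iff, Fin.forall_fin_two,
      OrthogonalIdempotents.fin_two_iff, OrthogonalIdempotents.fin_two_iff]
    simp only [IsIdempotentElem.iff_eq_zero_or_one, Set.mem_insert_iff, Set.mem_singleton_iff]
    tauto
  · rw [← Nat.card_coe_set_eq, Set.coe_ofPred, Nat.card_linearMap_pi_map_mul,
      Nat.card_orthogonalIdempotents_pi, Nat.card_fin]
    norm_num
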